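/- For φ ∈ V(Σ) and S ∈ Σ, the following are equivalent: (i) φ(S) is inclusion-minimal in φ[Σ]; (ii) φ^S ∈ V(Σ); (iii) there exists ψ ∈ V(Σ) with φ(S) inclusion-minimal in φ[Δ(φ,ψ)]. -/
import Mathlib


open Set

variable {X : Type*}

/-- `S` is an `X`-split: a bipartition of `X` into two nonempty parts. -/
def IsSplit (S : Set (Set X)) : Prop :=
  ∃ A : Set X, A.Nonempty ∧ Aᶜ.Nonempty ∧ S = {A, Aᶜ}

/-- Vertices of the Buneman graph `B(Σ)`: maps `φ : Σ → P(X)` with (BG1) `φ S ∈ S`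
and (BG2) `φ S ∩ φ S' ≠ ∅`. -/
def IsVertex (SS : Set (Set (Set X))) (φ : Set (Set X) → Set X) : Prop :=
  (∀ S ∈ SS, φ S ∈ S) ∧ ∀ S ∈ SS, ∀ S' ∈ SS, (φ S ∩ φ S').Nonempty

/-- The difference set `Δ(φ,ψ) = {S ∈ Σ : φ S ≠ ψ S}`. -/
def Delta (SS : Set (Set (Set X))) (φ ψ : Set (Set X) → Set X) : Set (Set (Set X)) :=
  {S ∈ SS | φ S ≠ ψ S}

/-- The Buneman graph: vertices at Hamming distance 1 are adjacent. -/
def BunemanGraph (SS : Set (Set (Set X))) :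
    SimpleGraph {φ : Set (Set X) → Set X // IsVertex SS φ} :=
  SimpleGraph.fromRel (fun φ ψ => ∃ S, Delta SS φ.1 ψ.1 = {S})

/-- Two splits are compatible if one of the four pairwise intersections of parts is empty. -/
def Compatible (S S' : Set (Set X)) : Prop :=
  ∃ A ∈ S, ∃ A' ∈ S', A ∩ A' = ∅

/-- The incompatibility graph `Γ(Σ)`. -/
def IncompatGraph (SS : Set (Set (Set X))) : SimpleGraph SS :=
  SimpleGraph.fromRel (fun S S' => ¬ Compatible S.1 S'.1)

/-- `φ S` is inclusion-minimal in the image `φ[Σ]`. -/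
def MinInImage (SS : Set (Set (Set X))) (φ : Set (Set X) → Set X)
    (S : Set (Set X)) : Prop :=
  S ∈ SS ∧ ∀ T ∈ SS, φ T ⊆ φ S → φ T = φ S

/-- `φ` is a cut vertex of the Buneman graph: the induced subgraph on `V(Σ) − {φ}`
is disconnected. -/
def IsCutVertex (SS : Set (Set (Set X)))
    (φ : {φ : Set (Set X) → Set X // IsVertex SS φ}) : Prop :=
  ¬ (SimpleGraph.induce {ψ : {φ : Set (Set X) → Set X // IsVertex SS φ} | ψ ≠ φ}
      (BunemanGraph SS)).Preconnected

lemma split_eq_pair {S : Set (Set X)} (h : IsSplit S) {A : Set X} (hA : A ∈ S) :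
    S = {A, Aᶜ} ∧ A.Nonempty ∧ Aᶜ.Nonempty := by
  obtain ⟨B, hB, hBc, rfl⟩ := h
  rcases hA with rfl | hA
  · exact ⟨rfl, hB, hBc⟩
  · rcases hA with rfl
    refine ⟨?_, hBc, by simpa using hB⟩
    rw [compl_compl]
    exact Set.pair_comm B Bᶜ

lemma split_unique {S T : Set (Set X)} (hS : IsSplit S) (hT : IsSplit T)
    {A : Set X} (hAS : A ∈ S) (hAT : A ∈ T) : S = T := by
  rw [(split_eq_pair hS hAS).1, (split_eq_pair hT hAT).1]

lemma mem_split_other {S : Set (Set X)} (h : IsSplit S) {a b : Set X}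
    (ha : a ∈ S) (hb : b ∈ S) (hne : a ≠ b) : b = aᶜ := by
  obtain ⟨A, -, -, rfl⟩ := h
  simp only [Set.mem_insert_iff, Set.mem_singleton_iff] at ha hb
  rcases ha with rfl | rfl <;> rcases hb with rfl | rfl <;>
    first
      | exact absurd rfl hne
      | rfl
      | exact (compl_compl _).symm

lemma subset_of_inter_compl_empty {A B : Set X} (h : A ∩ Bᶜ = ∅) : A ⊆ B := by
  rw [← Set.diff_eq, Set.diff_eq_empty] at h
  exact h

open Classical in
theorem stmt2 [Fintype X] (SS : Set (Set (Set X))) (hsplits : ∀ S ∈ SS, IsSplit S)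
    (φ : Set (Set X) → Set X) (hφ : IsVertex SS φ)
    (S : Set (Set X)) (hS : S ∈ SS) :
    List.TFAE [
      ∀ T ∈ SS, φ T ⊆ φ S → φ T = φ S,
      IsVertex SS (fun T => if T = S then (φ S)ᶜ else φ T),
      ∃ ψ, IsVertex SS ψ ∧ φ S ≠ ψ S ∧
        ∀ T ∈ Delta SS φ ψ, φ T ⊆ φ S → φ T = φ S] := by
  obtain ⟨hφ1, hφ2⟩ := hφ
  have hSp := split_eq_pair (hsplits S hS) (hφ1 S hS)
  have hSc : (φ S)ᶜ ∈ S := by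
    nth_rewrite 1 [hSp.1]
    exact Set.mem_insert_iff.mpr (Or.inr rfl)
  have key : ∀ T ∈ SS, φ T = φ S → T = S := fun T hT h =>
    split_unique (hsplits T hT) (hsplits S hS) (hφ1 T hT) (h ▸ hφ1 S hS)
  tfae_have 1 → 2 := by
    intro hmin
    constructor
    · intro T hT
      by_cases hTS : T = S
      · simp only [if_pos hTS, hTS]
        exact hSc
      · simp only [if_neg hTS]
        exact hφ1 T hT
    · intro T hT T' hT'
      by_cases hTS : T = S <;> by_cases hTS' : T' = S
      · simp only [if_pos hTS, if_pos hTS']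
        simpa using hSp.2.2
      · simp only [if_pos hTS, if_neg hTS']
        rw [Set.inter_comm]
        rcases Set.eq_empty_or_nonempty (φ T' ∩ (φ S)ᶜ) with h | h
        · exact absurd (key T' hT' (hmin T' hT' (subset_of_inter_compl_empty h))) hTS'
        · exact h
      · simp only [if_neg hTS, if_pos hTS']
        rcases Set.eq_empty_or_nonempty (φ T ∩ (φ S)ᶜ) with h | h
        · exact absurd (key T hT (hmin T hT (subset_of_inter_compl_empty h))) hTS
        · exact h
      · simp only [if_neg hTS, if_neg hTS']
        exact hφ2 T hT T' hT'
  tfae_have 2 → 3 := by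
    intro hv
    refine ⟨fun T => if T = S then (φ S)ᶜ else φ T, hv, ?_, ?_⟩
    · have hne : φ S ≠ (φ S)ᶜ := by
        intro h
        have h2 : φ S ∩ (φ S)ᶜ = ∅ := Set.inter_compl_self _
        rw [← h, Set.inter_self] at h2
        exact hSp.2.1.ne_empty h2
      simpa using hne
    · intro T hT hsub
      rcases hT with ⟨hT1, hT2⟩
      by_cases hTS : T = S
      · rw [hTS]
      · simp only [if_neg hTS] at hT2
        exact absurd rfl hT2
  tfae_have 3 → 1 := by
    rintro ⟨ψ, ⟨hψ1, hψ2⟩, hne, hmin⟩ T hT hsub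
    have hψS : ψ S = (φ S)ᶜ :=
      mem_split_other (hsplits S hS) (hφ1 S hS) (hψ1 S hS) hne
    by_cases hTd : φ T = ψ T
    · exfalso
      have h2 := hψ2 T hT S hS
      rw [← hTd, hψS] at h2
      obtain ⟨x, hx1, hx2⟩ := h2
      exact hx2 (hsub hx1)
    · exact hmin T ⟨hT, hTd⟩ hsub
  tfae_finish
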